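/- Let P be a poset with cover graph G and let Q be the incidence poset of G. Then dim(Q) ≤ 2·dim(P). -/

import Mathlib

open SimpleGraph

/-- `x` is covered by `y` with respect to the order-like relation `le`. -/
def CovRel {α : Type*} (le : α → α → Prop) (x y : α) : Prop :=
  le x y ∧ x ≠ y ∧ ∀ z, le x z → le z y → z = x ∨ z = y

/-- The cover graph of (the poset given by) the relation `le`. -/
def coverGraph {α : Type*} (le : α → α → Prop) : SimpleGraph α where
  Adj x y := CovRel le x y ∨ CovRel le y x
  symm := ⟨by intro x y h; tauto⟩
  loopless := ⟨by intro x h; rcases h with ⟨_, h2, _⟩ | ⟨_, h2, _⟩ <;> exact h2 rfl⟩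

/-- A family of linear orders whose intersection is `le` (each is then a linear
extension of `le`). -/
def IsRealizer {α : Type*} (le : α → α → Prop) {t : ℕ} (L : Fin t → α → α → Prop) : Prop :=
  (∀ i, IsLinearOrder α (L i)) ∧ ∀ x y, le x y ↔ ∀ i, L i x y

/-- The order dimension of the poset given by `le`: the least positive size of a realizer. -/
noncomputable def dimRel {α : Type*} (le : α → α → Prop) : ℕ :=
  sInf {t | 0 < t ∧ ∃ L : Fin t → α → α → Prop, IsRealizer le L}

/-- `x` lies strictly between `y` and `z` in the linear order (given as a `≤`-relation) `L`. -/
def StrictBtw {α : Type*} (L : α → α → Prop) (y x z : α) : Prop :=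
  (L y x ∧ L x z ∧ x ≠ y ∧ x ≠ z) ∨ (L z x ∧ L x y ∧ x ≠ y ∧ x ≠ z)

/-- A family of linear orders witnessing the eye condition for `G`. -/
def IsEyeFamily {α : Type*} (G : SimpleGraph α) {s : ℕ} (L : Fin s → α → α → Prop) : Prop :=
  (∀ i, IsLinearOrder α (L i)) ∧
  ∀ x y z : α, x ≠ y → x ≠ z → y ≠ z → G.Adj y z → ∃ i, ¬ StrictBtw (L i) y x z

/-- The eye parameter of a graph. -/
noncomputable def eye {α : Type*} (G : SimpleGraph α) : ℕ :=
  sInf {s | 0 < s ∧ ∃ L : Fin s → α → α → Prop, IsEyeFamily G L}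

/-- Ground set of the incidence poset of `G`: vertices together with edges. -/
def IncGround {V : Type*} (G : SimpleGraph V) : Type _ := V ⊕ G.edgeSet

/-- The order of the incidence poset of `G`: vertices are minimal, edges are maximal,
and a vertex is below an edge exactly when it is one of its endpoints
(i.e. inclusion order, viewing edges as 2-element vertex sets). -/
def incLE {V : Type*} (G : SimpleGraph V) : IncGround G → IncGround G → Prop
  | Sum.inl x, Sum.inl y => x = y
  | Sum.inl x, Sum.inr e => x ∈ (e : Sym2 V)
  | Sum.inr _, Sum.inl _ => False
  | Sum.inr e, Sum.inr f => e = f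

/-- The dimension of the incidence poset of `G`. -/
noncomputable def incDim {V : Type*} (G : SimpleGraph V) : ℕ := dimRel (incLE G)

/-- A family of linear extensions of `le` such that whenever `z` covers both `x` and `y`,
some member puts `x` above `y`: an upper-cover realizer. -/
def IsUCRealizer {α : Type*} (le : α → α → Prop) {t : ℕ} (L : Fin t → α → α → Prop) : Prop :=
  (∀ i, IsLinearOrder α (L i)) ∧ (∀ x y, le x y → ∀ i, L i x y) ∧
  ∀ z x y : α, CovRel le x z → CovRel le y z → x ≠ y → ∃ i, L i y x

/-- The upper cover dimension: least positive size of an upper-cover realizer. -/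
noncomputable def dimUC {α : Type*} (le : α → α → Prop) : ℕ :=
  sInf {t | 0 < t ∧ ∃ L : Fin t → α → α → Prop, IsUCRealizer le L}

/-- The poset given by `le` has height exactly `r`. -/
def HeightEq {α : Type*} (le : α → α → Prop) (r : ℕ) : Prop :=
  (∃ c : Finset α, IsChain le (c : Set α) ∧ c.card = r) ∧
  ∀ c : Finset α, IsChain le (c : Set α) → c.card ≤ r

/-!
An element `u` of the incidence poset `Q` of the cover graph of `P` is sent to the pair
`(top u, bottom u) ∈ P × Pᵒᵈ`, where a vertex `x` is its own top and bottom and a cover edge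
`a ⋖ b` has top `b` and bottom `a`. Since the edges are cover pairs, this is an order embedding
of `Q` into `P × Pᵒᵈ`. Dimension is monotone under embeddings and subadditive under products,
and `Pᵒᵈ` has the same dimension as `P`, so `dim Q ≤ 2 · dim P`.
-/

open Function

section Realizer

variable {α β : Type*}

/-- For linear `r`, this is the lexicographic order: `r`-strictly below, or equal first
coordinates and `s` on the second. -/
def lexLE (r : α → α → Prop) (s : β → β → Prop) (p q : α × β) : Prop :=
  r p.1 q.1 ∧ (p.1 = q.1 → s p.2 q.2)

lemma isLinearOrder_lexLE {r : α → α → Prop} {s : β → β → Prop}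
    [IsLinearOrder α r] [IsLinearOrder β s] : IsLinearOrder (α × β) (lexLE r s) where
  refl p := ⟨refl_of r _, fun _ => refl_of s _⟩
  trans p q w hpq hqw := by
    refine ⟨trans_of r hpq.1 hqw.1, fun hpw => ?_⟩
    have hpq₁ : p.1 = q.1 := antisymm_of r hpq.1 (hpw ▸ hqw.1)
    exact trans_of s (hpq.2 hpq₁) (hqw.2 (hpq₁ ▸ hpw))
  antisymm p q hpq hqp := by
    have h₁ : p.1 = q.1 := antisymm_of r hpq.1 hqp.1
    exact Prod.ext h₁ (antisymm_of s (hpq.2 h₁) (hqp.2 h₁.symm))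
  total p q := by
    by_cases h : p.1 = q.1
    · rcases total_of s p.2 q.2 with h' | h'
      · exact .inl ⟨h ▸ refl_of r _, fun _ => h'⟩
      · exact .inr ⟨h ▸ refl_of r _, fun _ => h'⟩
    · rcases total_of r p.1 q.1 with h' | h'
      · exact .inl ⟨h', fun h'' => absurd h'' h⟩
      · exact .inr ⟨h', fun h'' => absurd h''.symm h⟩

lemma IsRealizer.swap {r : α → α → Prop} {t : ℕ} {L : Fin t → α → α → Prop}
    (hL : IsRealizer r L) : IsRealizer (swap r) (fun i => swap (L i)) :=
  ⟨fun i => have := hL.1 i; inferInstance, fun x y => hL.2 y x⟩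

lemma IsRealizer.comap {r : β → β → Prop} {t : ℕ} {L : Fin t → β → β → Prop}
    (hL : IsRealizer r L) {le : α → α → Prop} {f : α → β} (hf : Injective f)
    (hle : ∀ x y, le x y ↔ r (f x) (f y)) : IsRealizer le (fun i => L i on f) :=
  ⟨fun i => have := hL.1 i; hf.isLinearOrder_onFun (L i), fun x y => (hle x y).trans (hL.2 _ _)⟩

lemma IsRealizer.prod {r : α → α → Prop} {s : β → β → Prop} {m n : ℕ}
    {L : Fin m → α → α → Prop} {M : Fin n → β → β → Prop}
    (hL : IsRealizer r L) (hM : IsRealizer s M) (i₀ : Fin m) (j₀ : Fin n) :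
    IsRealizer (fun p q : α × β => r p.1 q.1 ∧ s p.2 q.2)
      (Fin.append (fun i => lexLE (L i) (M j₀)) (fun j => lexLE (M j) (L i₀) on Prod.swap)) := by
  refine ⟨fun k => ?_, fun p q => ?_⟩
  · have := hL.1; have := hM.1
    induction k using Fin.addCases with
    | left i => rw [Fin.append_left]; exact isLinearOrder_lexLE
    | right j =>
      rw [Fin.append_right]
      have : IsLinearOrder _ (lexLE (M j) (L i₀)) := isLinearOrder_lexLE
      exact Prod.swap_injective.isLinearOrder_onFun _
  simp only [Fin.forall_fin_add, Fin.append_left, Fin.append_right, hL.2, hM.2]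
  constructor
  · rintro ⟨hr, hs⟩
    exact ⟨fun i => ⟨hr i, fun _ => hs j₀⟩, fun j => ⟨hs j, fun _ => hr i₀⟩⟩
  · rintro ⟨hr, hs⟩
    exact ⟨fun i => (hr i).1, fun j => (hs j).1⟩

lemma exists_linearExtension_swap [PartialOrder α] {x y : α} (hxy : ¬ x ≤ y) :
    ∃ s : α → α → Prop, IsLinearOrder α s ∧ (∀ a b : α, a ≤ b → s a b) ∧ s y x := by
  let r : α → α → Prop := fun a b => a ≤ b ∨ (a ≤ y ∧ x ≤ b)
  have : IsPartialOrder α r := by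
    refine { refl := fun a => .inl le_rfl, trans := ?_, antisymm := ?_ }
    · rintro a b c (hab | ⟨hay, hxb⟩) (hbc | ⟨hby, hxc⟩)
      · exact .inl (hab.trans hbc)
      · exact .inr ⟨hab.trans hby, hxc⟩
      · exact .inr ⟨hay, hxb.trans hbc⟩
      · exact absurd (hxb.trans hby) hxy
    · rintro a b (hab | ⟨hay, hxb⟩) (hba | ⟨hby, hxa⟩)
      · exact le_antisymm hab hba
      · exact absurd (hxa.trans (hab.trans hby)) hxy
      · exact absurd (hxb.trans (hba.trans hay)) hxy
      · exact absurd (hxb.trans hby) hxy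
  obtain ⟨s, hs, hrs⟩ := extend_partialOrder r
  exact ⟨s, hs, fun a b hab => hrs a b (.inl hab), hrs y x (.inr ⟨le_rfl, le_rfl⟩)⟩

lemma exists_isRealizer [Finite α] [PartialOrder α] :
    ∃ t, 0 < t ∧ ∃ L : Fin t → α → α → Prop, IsRealizer (· ≤ ·) L := by
  classical
  obtain ⟨s₀, hs₀, hle₀⟩ := extend_partialOrder ((· ≤ ·) : α → α → Prop)
  choose s hs hle hswap using
    fun p : {p : α × α // ¬ p.1 ≤ p.2} => exists_linearExtension_swap p.2
  -- The extra index `none` keeps the family nonempty when `α` is empty.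
  obtain ⟨t, ⟨e⟩⟩ := Finite.exists_equiv_fin (Option {p : α × α // ¬ p.1 ≤ p.2})
  refine ⟨t, (e none).pos, fun k => (e.symm k).elim s₀ s, fun k => ?_, fun x y => ?_⟩
  · dsimp only
    generalize e.symm k = o
    cases o
    exacts [hs₀, hs _]
  · constructor
    · intro hxy k
      cases e.symm k
      exacts [hle₀ x y hxy, hle _ x y hxy]
    · intro hall
      by_contra hxy
      have hyx := hswap ⟨(x, y), hxy⟩
      have hxy' := hall (e (some ⟨(x, y), hxy⟩))
      simp only [Equiv.symm_apply_apply, Option.elim] at hxy'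
      have := hs ⟨(x, y), hxy⟩
      exact hxy (antisymm_of _ hxy' hyx).le

lemma dimRel_pos_and_isRealizer [Finite α] [PartialOrder α] :
    0 < dimRel ((· ≤ ·) : α → α → Prop) ∧
      ∃ L : Fin (dimRel ((· ≤ ·) : α → α → Prop)) → α → α → Prop, IsRealizer (· ≤ ·) L :=
  Nat.sInf_mem exists_isRealizer

end Realizer

section CoverGraph

variable {α : Type*} [PartialOrder α]

lemma covRel_iff_covBy {a b : α} : CovRel (· ≤ ·) a b ↔ a ⋖ b := by
  rw [covBy_iff_wcovBy_and_ne, wcovBy_iff_le_and_eq_or_eq, CovRel]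
  tauto

lemma exists_covBy_of_mem_edgeSet {e : Sym2 α}
    (he : e ∈ (coverGraph ((· ≤ ·) : α → α → Prop)).edgeSet) :
    ∃ p : α × α, p.1 ⋖ p.2 ∧ e = s(p.1, p.2) := by
  induction e using Sym2.ind with
  | _ x y =>
    rcases he with h | h
    · exact ⟨(x, y), covRel_iff_covBy.1 h, rfl⟩
    · exact ⟨(y, x), covRel_iff_covBy.1 h, Sym2.eq_swap⟩

noncomputable def coverEdge (e : (coverGraph ((· ≤ ·) : α → α → Prop)).edgeSet) : α × α :=
  (exists_covBy_of_mem_edgeSet e.2).choose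

lemma coverEdge_covBy (e : (coverGraph ((· ≤ ·) : α → α → Prop)).edgeSet) :
    (coverEdge e).1 ⋖ (coverEdge e).2 :=
  (exists_covBy_of_mem_edgeSet e.2).choose_spec.1

lemma coe_eq_coverEdge (e : (coverGraph ((· ≤ ·) : α → α → Prop)).edgeSet) :
    (e : Sym2 α) = s((coverEdge e).1, (coverEdge e).2) :=
  (exists_covBy_of_mem_edgeSet e.2).choose_spec.2

noncomputable def incKey : IncGround (coverGraph ((· ≤ ·) : α → α → Prop)) → α × α
  | Sum.inl x => (x, x)
  | Sum.inr e => ((coverEdge e).2, (coverEdge e).1)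

lemma incLE_iff_incKey (u v : IncGround (coverGraph ((· ≤ ·) : α → α → Prop))) :
    incLE _ u v ↔ (incKey u).1 ≤ (incKey v).1 ∧ (incKey v).2 ≤ (incKey u).2 := by
  rcases u with x | e <;> rcases v with y | f <;> simp only [incLE, incKey]
  · exact le_antisymm_iff
  · have hf := coverEdge_covBy f
    rw [coe_eq_coverEdge, Sym2.mem_iff]
    constructor
    · rintro (rfl | rfl)
      exacts [⟨hf.le, le_rfl⟩, ⟨le_rfl, hf.le⟩]
    · exact fun ⟨hxt, hbx⟩ => hf.eq_or_eq hbx hxt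
  · exact iff_of_false id fun ⟨hty, hyb⟩ => (coverEdge_covBy e).lt.not_ge (hty.trans hyb)
  · constructor
    · rintro rfl
      exact ⟨le_rfl, le_rfl⟩
    · rintro ⟨htop, hbot⟩
      have he := coverEdge_covBy e
      have hf := coverEdge_covBy f
      -- `e` sits inside the cover interval of `f`, so both endpoints agree.
      have hb : (coverEdge e).1 = (coverEdge f).1 :=
        (hf.eq_or_eq hbot (he.le.trans htop)).resolve_right (he.lt.trans_le htop).ne
      have ht : (coverEdge e).2 = (coverEdge f).2 :=
        (hf.eq_or_eq (hbot.trans he.le) htop).resolve_left (hb ▸ he.lt.ne')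
      exact Subtype.ext (by rw [coe_eq_coverEdge, coe_eq_coverEdge, hb, ht])

lemma incKey_injective : Injective (incKey (α := α)) := by
  intro u v huv
  have huv' := (incLE_iff_incKey u v).2 ⟨huv.le.1, huv.ge.2⟩
  have hvu := (incLE_iff_incKey v u).2 ⟨huv.ge.1, huv.le.2⟩
  rcases u with x | e <;> rcases v with y | f <;> simp only [incLE] at huv' hvu <;>
    exact congrArg _ huv'

end CoverGraph

/-- If `G` is the cover graph of a poset `P` and `Q` the incidence poset of `G`,
then `dim(Q) ≤ 2 · dim(P)`. -/
theorem stmt_2 {α : Type*} [Fintype α] [PartialOrder α] :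
    incDim (coverGraph ((· ≤ ·) : α → α → Prop)) ≤ 2 * dimRel ((· ≤ ·) : α → α → Prop) := by
  obtain ⟨hd, L, hL⟩ := dimRel_pos_and_isRealizer (α := α)
  have hQ := (hL.prod hL.swap ⟨0, hd⟩ ⟨0, hd⟩).comap incKey_injective incLE_iff_incKey
  calc incDim (coverGraph ((· ≤ ·) : α → α → Prop))
      ≤ dimRel ((· ≤ ·) : α → α → Prop) + dimRel ((· ≤ ·) : α → α → Prop) :=
        Nat.sInf_le ⟨by omega, _, hQ⟩
    _ = 2 * dimRel ((· ≤ ·) : α → α → Prop) := (two_mul _).symm
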